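/- Every admissible string belonging to E^k_{p,q} (k ≥ 0, p,q ≥ 1) has length exactly 2p + 2q + k - 1 and is a nondegenerate surjection onto {1,...,p+q}; hence E^k_{p,q} lies in χ(p+q) in degree p + q + k - 1. -/

import Mathlib

/-!
Row 2 together with the leading `1` is `1` followed by a row `(p+1, 1, p+2, …, 1, p+t₂)`, and
every later row `(c, M, c+1, …, M, c+t)` runs through `t` new values of one sequence while
repeating the current top `M` of the other. So the values occurring are exactly the two runs
`1, …, p` and `p+1, …, p+q`, which are disjoint, and consecutive entries always lie in different
runs, hence differ. A later row introducing `t` values has length `2t+1` and rows 1 and 2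
together have length `2t₂`, so the total length is `2((p-1) + q) + (k+1)`.
-/

namespace AdmissibleStrings

/-- A row `(c, M, c+1, M, c+2, ..., M, c+t)` of an admissible table: it starts with the
current value `c` of its own increasing sequence, introduces `t` new values of that
sequence at the odd places, with the current value `M` of the other sequence serving as
the stable part at the even places.  Its length is `2t+1` (odd). -/
def rowA (c M t : ℕ) : List ℕ :=
  c :: (List.range t).flatMap fun j => [M, c + j + 1]

/-- The concatenation of the rows below the second one: the rows alternately extend the
first increasing sequence `1, 2, ..., p` (current value `a`) and the second increasing
sequence `p+1, ..., p+q` (current value `b`), by the numbers of new values listed in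
`ts`. -/
def rowsAux : ℕ → ℕ → Bool → List ℕ → List ℕ
  | _, _, _, [] => []
  | a, b, true, t :: ts => rowA a b t ++ rowsAux (a + t) b false ts
  | a, b, false, t :: ts => rowA b a t ++ rowsAux a (b + t) true ts

/-- The admissible string determined by the list `ts = (t₂, ..., t_{k+3})` of numbers of
new values introduced by the rows `2, ..., k+3` of an admissible table: row 1 is `(1)`;
row 2 is `(p+1, 1, p+2, 1, ..., 1, p+t₂)`; the following rows alternately extend the
sequence `1, ..., p` and the sequence `p+1, ..., p+q`. -/
def admString (p : ℕ) : List ℕ → List ℕ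
  | [] => [1]
  | t2 :: rest =>
      1 :: (((List.range t2).flatMap fun j => [p + j + 1, 1]).dropLast
        ++ rowsAux 1 (p + t2) true rest)

def evenIdxSum (l : List ℕ) : ℕ :=
  ∑ i ∈ Finset.range l.length, if i % 2 = 0 then l.getD i 0 else 0

def oddIdxSum (l : List ℕ) : ℕ :=
  ∑ i ∈ Finset.range l.length, if i % 2 = 1 then l.getD i 0 else 0

lemma evenIdxSum_cons (t : ℕ) (l : List ℕ) : evenIdxSum (t :: l) = t + oddIdxSum l := by
  rw [evenIdxSum, oddIdxSum, List.length_cons, Finset.sum_range_succ']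
  simp only [List.getD_cons_succ, List.getD_cons_zero, Nat.succ_mod_two_eq_zero_iff,
    Nat.zero_mod, if_true]
  ac_rfl

lemma oddIdxSum_cons (t : ℕ) (l : List ℕ) : oddIdxSum (t :: l) = evenIdxSum l := by
  rw [evenIdxSum, oddIdxSum, List.length_cons, Finset.sum_range_succ']
  simp [Nat.succ_mod_two_eq_one_iff]

lemma evenIdxSum_add_oddIdxSum (l : List ℕ) : evenIdxSum l + oddIdxSum l = l.sum := by
  induction l with
  | nil => simp [evenIdxSum, oddIdxSum]
  | cons t l ih => rw [evenIdxSum_cons, oddIdxSum_cons, List.sum_cons]; omega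

lemma rowA_succ (c M t : ℕ) : rowA c M (t + 1) = rowA c M t ++ [M, c + t + 1] := by
  simp [rowA, List.range_succ]

lemma length_rowA (c M t : ℕ) : (rowA c M t).length = 2 * t + 1 := by
  induction t with
  | zero => simp [rowA]
  | succ t ih => simp [rowA_succ, ih]; omega

lemma mem_rowA {c M t v : ℕ} : v ∈ rowA c M t ↔ (c ≤ v ∧ v ≤ c + t) ∨ (t ≠ 0 ∧ v = M) := by
  induction t with
  | zero => simp [rowA]; omega
  | succ t ih => simp [rowA_succ, ih]; omega

lemma _root_.Set.Icc_disjoint_Icc {α : Type*} [LinearOrder α] {a₁ b₁ a₂ b₂ : α} :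
    Disjoint (Set.Icc a₁ b₁) (Set.Icc a₂ b₂) ↔ min b₁ b₂ < max a₁ a₂ := by
  rw [Set.disjoint_iff_inter_eq_empty, Set.Icc_inter_Icc, Set.Icc_eq_empty_iff, not_le]

lemma isChain_cons_rowA_append {c M t : ℕ} (h : ∀ j ≤ t, c + j ≠ M) {l : List ℕ}
    (hl : ((c + t) :: l).IsChain (· ≠ ·)) : (M :: (rowA c M t ++ l)).IsChain (· ≠ ·) := by
  induction t generalizing l with
  | zero => simpa [rowA, List.isChain_cons_cons] using ⟨(h 0 le_rfl).symm, hl⟩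
  | succ t ih =>
    rw [rowA_succ, List.append_assoc]
    refine ih (fun j hj => h j (by omega)) ?_
    simpa [List.isChain_cons_cons] using ⟨h t (by omega), by have := h (t + 1) le_rfl; omega, hl⟩

lemma rowsAux_not (a b : ℕ) (side : Bool) (ts : List ℕ) :
    rowsAux b a (!side) ts = rowsAux a b side ts := by
  induction ts generalizing a b side with
  | nil => rfl
  | cons t ts ih =>
    cases side
    · exact congrArg (rowA b a t ++ ·) (ih a (b + t) true)
    · exact congrArg (rowA a b t ++ ·) (ih (a + t) b false)

lemma rowsAux_true_cons (a b t : ℕ) (ts : List ℕ) :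
    rowsAux a b true (t :: ts) = rowA a b t ++ rowsAux b (a + t) true ts := by
  rw [rowsAux, ← rowsAux_not b (a + t) true, Bool.not_true]

lemma length_rowsAux (a b : ℕ) (ts : List ℕ) :
    (rowsAux a b true ts).length = ts.length + 2 * ts.sum := by
  induction ts generalizing a b with
  | nil => rfl
  | cons t ts ih => simp [rowsAux_true_cons, length_rowA, ih]; omega

lemma le_of_mem_rowsAux {a b v : ℕ} {ts : List ℕ} (hv : v ∈ rowsAux a b true ts) :
    (a ≤ v ∧ v ≤ a + evenIdxSum ts) ∨ (b ≤ v ∧ v ≤ b + oddIdxSum ts) := by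
  induction ts generalizing a b with
  | nil => simp [rowsAux] at hv
  | cons t ts ih =>
    rw [evenIdxSum_cons, oddIdxSum_cons]
    rw [rowsAux_true_cons, List.mem_append, mem_rowA] at hv
    rcases hv with hv | hv
    · omega
    · have := ih hv; omega

lemma mem_rowsAux_of_lt {a b v : ℕ} {ts : List ℕ}
    (hv : (a < v ∧ v ≤ a + evenIdxSum ts) ∨ (b < v ∧ v ≤ b + oddIdxSum ts)) :
    v ∈ rowsAux a b true ts := by
  induction ts generalizing a b with
  | nil => simp [evenIdxSum, oddIdxSum] at hv; omega
  | cons t ts ih =>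
    rw [evenIdxSum_cons, oddIdxSum_cons] at hv
    rw [rowsAux_true_cons, List.mem_append, mem_rowA]
    by_cases hvt : a ≤ v ∧ v ≤ a + t
    · exact Or.inl (Or.inl hvt)
    · exact Or.inr (ih (by omega))

lemma isChain_rowsAux {a b : ℕ} {ts : List ℕ}
    (h : Disjoint (Set.Icc a (a + evenIdxSum ts)) (Set.Icc b (b + oddIdxSum ts))) :
    (b :: rowsAux a b true ts).IsChain (· ≠ ·) := by
  induction ts generalizing a b with
  | nil => exact List.isChain_singleton b
  | cons t ts ih =>
    rw [evenIdxSum_cons, oddIdxSum_cons, Set.Icc_disjoint_Icc] at h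
    rw [rowsAux_true_cons]
    refine isChain_cons_rowA_append (fun j hj => by omega) (ih ?_)
    rw [Set.Icc_disjoint_Icc]
    omega

lemma flatMap_range_succ_pair {α : Type*} (f : ℕ → α) (c : α) (t : ℕ) :
    (List.range (t + 1)).flatMap (fun j => [f j, c]) =
      f 0 :: (List.range t).flatMap (fun j => [c, f (j + 1)]) ++ [c] := by
  induction t with
  | zero => rfl
  | succ t ih => rw [List.range_succ, List.flatMap_append, ih, List.range_succ]; simp

lemma admString_succ_cons (p t : ℕ) (rest : List ℕ) :
    admString p ((t + 1) :: rest) =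
      1 :: (rowA (p + 1) 1 t ++ rowsAux 1 (p + t + 1) true rest) := by
  rw [admString, flatMap_range_succ_pair (fun j => p + j + 1), ← List.cons_append,
    List.dropLast_concat]
  simp only [rowA, List.cons_append]
  ring_nf

lemma isChain_admString_succ_cons {p t : ℕ} {rest : List ℕ} (hp : 1 ≤ p)
    (hE : evenIdxSum rest < p + t) : (admString p ((t + 1) :: rest)).IsChain (· ≠ ·) := by
  rw [admString_succ_cons]
  refine isChain_cons_rowA_append (fun j _ => by omega) ?_
  rw [add_right_comm]
  exact isChain_rowsAux (by rw [Set.Icc_disjoint_Icc]; omega)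

lemma mem_admString_succ_cons {p t v : ℕ} {rest : List ℕ} (hE : evenIdxSum rest + 1 = p) :
    v ∈ admString p ((t + 1) :: rest) ↔ 1 ≤ v ∧ v ≤ p + t + 1 + oddIdxSum rest := by
  rw [admString_succ_cons, List.mem_cons, List.mem_append, mem_rowA]
  constructor
  · rintro (rfl | hv | hv)
    · omega
    · omega
    · have := le_of_mem_rowsAux hv; omega
  · intro hv
    by_cases hv' : v = 1 ∨ (p + 1 ≤ v ∧ v ≤ p + 1 + t)
    · omega
    · exact Or.inr (Or.inr (mem_rowsAux_of_lt (by omega)))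

theorem stmt14_general (p q k : ℕ) (hp : 1 ≤ p) (ts : List ℕ)
    (hlen : ts.length = k + 2)
    (hhead : 1 ≤ ts.headI)
    (hseq1 : ∑ i ∈ Finset.range (k + 2),
      (if i % 2 = 1 then ts.getD i 0 else 0) = p - 1)
    (hseq2 : ∑ i ∈ Finset.range (k + 2),
      (if i % 2 = 0 then ts.getD i 0 else 0) = q) :
    (admString p ts).length = 2 * p + 2 * q + k - 1 ∧
    (admString p ts).Chain' (· ≠ ·) ∧
    (∀ v, v ∈ admString p ts ↔ 1 ≤ v ∧ v ≤ p + q) ∧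
    (admString p ts).length - (p + q) = p + q + k - 1 := by
  rw [← hlen] at hseq1 hseq2
  obtain ⟨t, rest, rfl, hrest⟩ : ∃ t rest, ts = (t + 1) :: rest ∧ rest.length = k + 1 := by
    rcases ts with _ | ⟨_ | t, rest⟩
    · simp at hlen
    · simp at hhead
    · exact ⟨t, rest, rfl, by simpa using hlen⟩
  have hE : evenIdxSum rest = p - 1 := by rw [← oddIdxSum_cons (t + 1)]; exact hseq1
  have hO : t + 1 + oddIdxSum rest = q := by rw [← evenIdxSum_cons]; exact hseq2
  have hsum := evenIdxSum_add_oddIdxSum rest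
  have hlength : (admString p ((t + 1) :: rest)).length = 2 * p + 2 * q + k - 1 := by
    simp only [admString_succ_cons, List.length_cons, List.length_append, length_rowA,
      length_rowsAux]
    omega
  refine ⟨hlength, isChain_admString_succ_cons hp (by omega), fun v => ?_, by omega⟩
  rw [mem_admString_succ_cons (by omega)]
  omega

/-- every admissible string belonging to `E^k_{p,q}` (i.e. coming from a
table with `k+3` rows, second row starting with `p+1`, first sequence ending at `p` and
maximal value `p+q`) has length exactly `2p + 2q + k - 1` and is a nondegenerate
surjection onto `{1, ..., p+q}`; hence `E^k_{p,q}` lies in `χ(p+q)` in degree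
`p + q + k - 1`. -/
theorem stmt14 (p q k : ℕ) (hp : 1 ≤ p) (hq : 1 ≤ q) (ts : List ℕ)
    (hlen : ts.length = k + 2)
    (hhead : 1 ≤ ts.headI)
    (hlast : ts.getLast? = some 0)
    (hseq1 : ∑ i ∈ Finset.range (k + 2),
      (if i % 2 = 1 then ts.getD i 0 else 0) = p - 1)
    (hseq2 : ∑ i ∈ Finset.range (k + 2),
      (if i % 2 = 0 then ts.getD i 0 else 0) = q) :
    (admString p ts).length = 2 * p + 2 * q + k - 1 ∧
    (admString p ts).Chain' (· ≠ ·) ∧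
    (∀ v, v ∈ admString p ts ↔ 1 ≤ v ∧ v ≤ p + q) ∧
    (admString p ts).length - (p + q) = p + q + k - 1 :=
  stmt14_general p q k hp ts hlen hhead hseq1 hseq2

end AdmissibleStrings
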